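/- arXiv:2506.08659 — 7 statements merged into one kernel-verified Lean document; each statement's English description precedes it below -/
import Mathlib

section
/- For a braid projection word w on n strands, every entry of the CN matrix N(w) is even if and only if w is pure (the permutation of strands induced by w is the identity). -/
/-- Left position of a crossing letter, as an element of `Fin n`. -/
def posL (n : ℕ) (k : Fin (n - 1)) : Fin n := ⟨k.val, by have := k.isLt; omega⟩

/-- Right position of a crossing letter, as an element of `Fin n`. -/
def posR (n : ℕ) (k : Fin (n - 1)) : Fin n := ⟨k.val + 1, by have := k.isLt; omega⟩

/-- The transposition of positions induced by a crossing letter. -/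
def braidSwap (n : ℕ) (k : Fin (n - 1)) : Equiv.Perm (Fin n) :=
  Equiv.swap (posL n k) (posR n k)

/-- CN matrix of a braid projection word, scanning with position-to-strand
assignment `π`.  Each letter records one crossing between the two strand
labels currently at the involved positions (counted symmetrically). -/
def CNaux (n : ℕ) : Equiv.Perm (Fin n) → List (Fin (n - 1)) → Matrix (Fin n) (Fin n) ℕ
  | _, [] => 0
  | π, k :: w =>
      Matrix.single (π (posL n k)) (π (posR n k)) 1 +
      Matrix.single (π (posR n k)) (π (posL n k)) 1 +
      CNaux n (π * braidSwap n k) w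

/-- CN matrix of a braid projection word on `n` strands. -/
def CN (n : ℕ) (w : List (Fin (n - 1))) : Matrix (Fin n) (Fin n) ℕ := CNaux n 1 w

/-- Final position-to-strand assignment after scanning the word. -/
def finalPerm (n : ℕ) : Equiv.Perm (Fin n) → List (Fin (n - 1)) → Equiv.Perm (Fin n)
  | π, [] => π
  | π, k :: w => finalPerm n (π * braidSwap n k) w

/-- A braid projection word is pure if the induced permutation of strands
is the identity. -/
def IsPure (n : ℕ) (w : List (Fin (n - 1))) : Prop := finalPerm n 1 w = 1

/-- A zero-diagonal matrix is T0 if `i < j < k`, `M i j = 0` and `M j k = 0`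
imply `M i k = 0`. -/
def IsT0 {n : ℕ} {α : Type*} [Zero α] (M : Matrix (Fin n) (Fin n) α) : Prop :=
  ∀ i j k : Fin n, i < j → j < k → M i j = 0 → M j k = 0 → M i k = 0


/-!
A letter records a crossing of strands `i` and `j` exactly when they occupy the two positions it
swaps, and then it reverses their relative order; every other letter preserves that order. Hence
`N(w) i j` is even iff `i` and `j` end in the same relative order as they started. The word is
pure iff this holds for every pair, because a strictly monotone permutation of `Fin n` is the
identity.
-/

lemma posL_ne_posR (n : ℕ) (k : Fin (n - 1)) : posL n k ≠ posR n k := by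
  simp [posL, posR, Fin.ext_iff]

lemma braidSwap_lt_braidSwap_iff_iff (n : ℕ) (k : Fin (n - 1)) (x y : Fin n) :
    (braidSwap n k x < braidSwap n k y ↔ x < y) ↔
      ¬(posL n k = x ∧ posR n k = y ∨ posR n k = x ∧ posL n k = y) := by
  simp only [braidSwap, Equiv.swap_apply_def]
  split_ifs <;> simp only [Fin.ext_iff, Fin.lt_def, posL, posR, true_iff] at * <;> omega

lemma even_single_add_single_apply_iff {α : Type*} [DecidableEq α] {a b : α} (hab : a ≠ b)
    (i j : α) :
    Even (Matrix.single a b (1 : ℕ) i j + Matrix.single b a 1 i j) ↔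
      ¬(a = i ∧ b = j ∨ b = i ∧ a = j) := by
  simp only [Matrix.single_apply]
  split_ifs <;> simp_all [eq_comm]

lemma even_CNaux_apply_iff (n : ℕ) (π : Equiv.Perm (Fin n)) (w : List (Fin (n - 1)))
    (i j : Fin n) :
    Even (CNaux n π w i j) ↔ (π⁻¹ i < π⁻¹ j ↔ (finalPerm n π w)⁻¹ i < (finalPerm n π w)⁻¹ j) := by
  induction w generalizing π with
  | nil => simp [CNaux, finalPerm]
  | cons k w ih =>
    have hlocal := even_single_add_single_apply_iff
      (π.injective.ne (posL_ne_posR n k)) i j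
    have hflip := braidSwap_lt_braidSwap_iff_iff n k (π⁻¹ i) (π⁻¹ j)
    simp only [← Equiv.Perm.eq_inv_iff_eq] at hlocal
    have hinv : ∀ z, (π * braidSwap n k)⁻¹ z = braidSwap n k (π⁻¹ z) := fun z => by
      simp [braidSwap, mul_inv_rev, Equiv.swap_inv]
    simp only [CNaux, finalPerm, Matrix.add_apply]
    rw [Nat.even_add, hlocal, ih, hinv, hinv, ← hflip]
    grind

theorem stmt1 (n : ℕ) (w : List (Fin (n - 1))) :
    (∀ i j : Fin n, Even (CN n w i j)) ↔ IsPure n w := by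
  constructor
  · intro heven
    have hmono : StrictMono ⇑(finalPerm n 1 w)⁻¹ := fun i j hij => by
      simpa [hij] using (even_CNaux_apply_iff n 1 w i j).1 (heven i j)
    exact inv_eq_one.1 (Equiv.ext fun x => hmono.apply_eq)
  · intro hpure i j
    rw [CN, even_CNaux_apply_iff, show finalPerm n 1 w = 1 from hpure]
end

section
/- If an n×n matrix M is the CN matrix of some braid projection word on n strands, then M is T0: for all indices i < j < k, if M(i,j) = 0 and M(j,k) = 0 then M(i,k) = 0. -/
/-!
Follow the positions `π⁻¹ i` of the strands while the word is scanned. A letter swaps two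
adjacent positions, so it preserves the relative order of any two strands except the pair
it makes cross. Hence if strand `j` starts between strands `i` and `k` and crosses neither
of them, it stays between them throughout; then `i` and `k` are never adjacent, so they
never cross.
-/

section

variable {n : ℕ}

lemma val_posR (l : Fin (n - 1)) : (posR n l : ℕ) = posL n l + 1 := rfl

lemma braidSwap_lt_braidSwap (l : Fin (n - 1)) {x y : Fin n} (hxy : x < y)
    (hl : ¬(x = posL n l ∧ y = posR n l)) : braidSwap n l x < braidSwap n l y := by
  have hR := val_posR l
  simp only [braidSwap, Equiv.swap_apply_def]
  split_ifs <;> simp only [Fin.lt_def, Fin.ext_iff, not_and_or] at * <;> omega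

lemma mul_braidSwap_inv_apply (π : Equiv.Perm (Fin n)) (l : Fin (n - 1)) (x : Fin n) :
    (π * braidSwap n l)⁻¹ x = braidSwap n l (π⁻¹ x) := by
  simp [braidSwap, mul_inv_rev, Equiv.Perm.mul_apply]

lemma CNaux_cons_apply_eq_zero_iff (π : Equiv.Perm (Fin n)) (l : Fin (n - 1))
    (w : List (Fin (n - 1))) (i j : Fin n) :
    CNaux n π (l :: w) i j = 0 ↔
      ¬(π⁻¹ i = posL n l ∧ π⁻¹ j = posR n l) ∧ ¬(π⁻¹ i = posR n l ∧ π⁻¹ j = posL n l) ∧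
        CNaux n (π * braidSwap n l) w i j = 0 := by
  simp only [CNaux, Matrix.add_apply, Matrix.single_apply, Nat.add_eq_zero_iff, ite_eq_right_iff,
    one_ne_zero, imp_false, Equiv.Perm.inv_def, Equiv.symm_apply_eq, and_assoc, @eq_comm _ i,
    @eq_comm _ j]

theorem CNaux_apply_eq_zero_of_between (w : List (Fin (n - 1))) :
    ∀ (π : Equiv.Perm (Fin n)) {i j k : Fin n}, π⁻¹ i < π⁻¹ j → π⁻¹ j < π⁻¹ k →
      CNaux n π w i j = 0 → CNaux n π w j k = 0 → CNaux n π w i k = 0 := by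
  induction w with
  | nil => intros; rfl
  | cons l w ih =>
    intro π i j k hij hjk
    simp only [CNaux_cons_apply_eq_zero_iff]
    rintro ⟨hij_cross, -, hij_rest⟩ ⟨hjk_cross, -, hjk_rest⟩
    have hR := val_posR l
    refine ⟨?_, ?_, ih _ ?_ ?_ hij_rest hjk_rest⟩
    · rintro ⟨hi, hk⟩
      rw [Fin.lt_def, hi] at hij
      rw [Fin.lt_def, hk] at hjk
      omega
    · rintro ⟨hi, hk⟩
      have hik := hij.trans hjk
      rw [Fin.lt_def, hi, hk] at hik
      omega
    · simpa only [mul_braidSwap_inv_apply] using braidSwap_lt_braidSwap l hij hij_cross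
    · simpa only [mul_braidSwap_inv_apply] using braidSwap_lt_braidSwap l hjk hjk_cross

end

theorem stmt3 (n : ℕ) (M : Matrix (Fin n) (Fin n) ℕ)
    (h : ∃ w : List (Fin (n - 1)), CN n w = M) : IsT0 M := by
  obtain ⟨w, rfl⟩ := h
  intro i j k hij hjk
  exact CNaux_apply_eq_zero_of_between w 1 (by simpa using hij) (by simpa using hjk)
end

section
/- If an n×n matrix M is the CN matrix of some braid projection word on n strands, then the reverse matrix M', defined by M'(i,j) = M(n+1-i, n+1-j) (reversing the order of rows and columns), is also the CN matrix of some braid projection word on n strands. -/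
/-!
Reflecting a braid projection turns the word `w` into `w.map Fin.rev` and a position assignment
`π` into `π * rev`; since each crossing is counted symmetrically, the CN matrix does not change.
Scanning the reflected word from the identity assignment is therefore scanning `w` from `rev`,
which relabels every strand `s` as `rev s` and so reverses rows and columns.
-/

lemma posL_rev (n : ℕ) (k : Fin (n - 1)) : posL n k.rev = (posR n k).rev :=
  Fin.ext (by simp only [posL, posR, Fin.val_rev]; omega)

lemma posR_rev (n : ℕ) (k : Fin (n - 1)) : posR n k.rev = (posL n k).rev :=
  Fin.ext (by simp only [posL, posR, Fin.val_rev]; omega)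

lemma revPerm_mul_braidSwap_rev (n : ℕ) (k : Fin (n - 1)) :
    Fin.revPerm * braidSwap n k.rev = braidSwap n k * Fin.revPerm := by
  rw [braidSwap, Equiv.mul_swap_eq_swap_mul, posL_rev, posR_rev, Fin.revPerm_apply,
    Fin.revPerm_apply, Fin.rev_rev, Fin.rev_rev, Equiv.swap_comm, braidSwap]

lemma CNaux_mul_left (n : ℕ) (σ : Equiv.Perm (Fin n)) (w : List (Fin (n - 1))) :
    ∀ π : Equiv.Perm (Fin n),
      CNaux n (σ * π) w = (CNaux n π w).submatrix σ.symm σ.symm := by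
  induction w with
  | nil => intro π; rfl
  | cons k w ih =>
    intro π
    simp only [CNaux, Matrix.submatrix_add, Pi.add_apply, Matrix.submatrix_single_equiv,
      Equiv.symm_symm, Equiv.Perm.mul_apply, mul_assoc, ih]

lemma CNaux_mul_revPerm_map_rev (n : ℕ) (w : List (Fin (n - 1))) :
    ∀ π : Equiv.Perm (Fin n), CNaux n (π * Fin.revPerm) (w.map Fin.rev) = CNaux n π w := by
  induction w with
  | nil => intro π; rfl
  | cons k w ih =>
    intro π
    simp only [List.map_cons, CNaux, Equiv.Perm.mul_apply, posL_rev, posR_rev,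
      Fin.revPerm_apply, Fin.rev_rev, mul_assoc, revPerm_mul_braidSwap_rev, ← ih]
    rw [add_comm (Matrix.single _ _ 1) (Matrix.single _ _ 1)]

lemma CN_map_rev (n : ℕ) (w : List (Fin (n - 1))) :
    CN n (w.map Fin.rev) = (CN n w).submatrix Fin.rev Fin.rev := by
  have hrev : (Fin.revPerm : Equiv.Perm (Fin n)) * Fin.revPerm = 1 :=
    Equiv.ext Fin.rev_rev
  calc CN n (w.map Fin.rev)
      = CNaux n (Fin.revPerm * Fin.revPerm) (w.map Fin.rev) := by rw [hrev, CN]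
    _ = CNaux n (Fin.revPerm * 1) w := by rw [CNaux_mul_revPerm_map_rev, mul_one]
    _ = (CN n w).submatrix Fin.rev Fin.rev := by
      rw [CNaux_mul_left, Fin.revPerm_symm, CN]; rfl

theorem stmt4 (n : ℕ) (M : Matrix (Fin n) (Fin n) ℕ)
    (h : ∃ w : List (Fin (n - 1)), CN n w = M) :
    ∃ v : List (Fin (n - 1)), CN n v = fun i j => M i.rev j.rev := by
  obtain ⟨w, rfl⟩ := h
  exact ⟨w.map Fin.rev, CN_map_rev n w⟩
end

section
/- Let M₁ be an m×m matrix that is the CN matrix of some braid projection word on m strands, and let 1 ≤ I ≤ n−m+1. Define the n×n matrix M₂ by M₂(i+I−1, j+I−1) = M₁(i,j) for 1 ≤ i,j ≤ m and M₂(i,j) = 0 whenever i < I or j > I+m−1 (and for all other entries outside the embedded block). Then M₂ is the CN matrix of some braid projection word on n strands. -/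
/-! Scanning the word `w` with every letter shifted by `t`, the strand at position `a + t` is
always `σ a + t`, where `σ` is the assignment reached in the scan of `w`, and the strands outside
the block never move; so each recorded crossing is the shift of a crossing of `w`. -/

section BlockEmbedding

variable {m n : ℕ} {α : Type*} (t : ℕ) (hmn : t + m ≤ n)

def shiftEmb : Fin m ↪ Fin n :=
  (Fin.addNatEmb t).trans (Fin.castLEEmb (by omega))

@[simp] lemma shiftEmb_val (a : Fin m) : (shiftEmb t hmn a : ℕ) = a + t := rfl

def blockEmbed [Zero α] (M : Matrix (Fin m) (Fin m) α) : Matrix (Fin n) (Fin n) α :=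
  Matrix.of fun i j =>
    if h : t ≤ i.val ∧ i.val < t + m ∧ t ≤ j.val ∧ j.val < t + m then
      M ⟨i.val - t, Nat.sub_lt_left_of_lt_add h.1 h.2.1⟩
        ⟨j.val - t, Nat.sub_lt_left_of_lt_add h.2.2.1 h.2.2.2⟩
    else 0

lemma blockEmbed_zero [Zero α] :
    (blockEmbed t (0 : Matrix (Fin m) (Fin m) α) : Matrix (Fin n) (Fin n) α) = 0 := by
  ext i j
  simp [blockEmbed]

lemma blockEmbed_add [AddZeroClass α] (M N : Matrix (Fin m) (Fin m) α) :
    (blockEmbed t (M + N) : Matrix (Fin n) (Fin n) α) = blockEmbed t M + blockEmbed t N := by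
  ext i j
  simp only [blockEmbed, Matrix.of_apply, Matrix.add_apply]
  split_ifs <;> simp

lemma blockEmbed_single [Zero α] (a b : Fin m) (c : α) :
    blockEmbed t (Matrix.single a b c) = Matrix.single (shiftEmb t hmn a) (shiftEmb t hmn b) c := by
  ext i j
  simp only [blockEmbed, Matrix.of_apply, Matrix.single_apply, Fin.ext_iff, shiftEmb_val]
  split_ifs <;> first | rfl | omega

def shiftLetter (k : Fin (m - 1)) : Fin (n - 1) := ⟨k + t, by omega⟩

lemma posL_shiftLetter (k : Fin (m - 1)) :
    posL n (shiftLetter t hmn k) = shiftEmb t hmn (posL m k) := rfl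

lemma posR_shiftLetter (k : Fin (m - 1)) :
    posR n (shiftLetter t hmn k) = shiftEmb t hmn (posR m k) := by
  ext
  simp only [posR, shiftLetter, shiftEmb_val]
  omega

lemma braidSwap_shiftLetter_shiftEmb (k : Fin (m - 1)) (a : Fin m) :
    braidSwap n (shiftLetter t hmn k) (shiftEmb t hmn a) = shiftEmb t hmn (braidSwap m k a) := by
  rw [braidSwap, braidSwap, posL_shiftLetter, posR_shiftLetter,
    (shiftEmb t hmn).injective.map_swap]

lemma CNaux_map_shiftLetter (w : List (Fin (m - 1))) (σ : Equiv.Perm (Fin m))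
    (π : Equiv.Perm (Fin n)) (hπ : ∀ a, π (shiftEmb t hmn a) = shiftEmb t hmn (σ a)) :
    CNaux n π (w.map (shiftLetter t hmn)) = blockEmbed t (CNaux m σ w) := by
  induction w generalizing σ π with
  | nil => simp only [List.map_nil, CNaux, blockEmbed_zero]
  | cons k w ih =>
    have hstep : ∀ a, (π * braidSwap n (shiftLetter t hmn k)) (shiftEmb t hmn a) =
        shiftEmb t hmn ((σ * braidSwap m k) a) := fun a => by
      simp only [Equiv.Perm.mul_apply, braidSwap_shiftLetter_shiftEmb, hπ]
    simp only [List.map_cons, CNaux, blockEmbed_add, blockEmbed_single t hmn, posL_shiftLetter,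
      posR_shiftLetter, hπ, ih _ _ hstep]

end BlockEmbedding

theorem stmt5 (m n t : ℕ) (hmn : t + m ≤ n) (w : List (Fin (m - 1))) :
    ∃ v : List (Fin (n - 1)), ∀ i j : Fin n,
      CN n v i j =
        if h : t ≤ i.val ∧ i.val < t + m ∧ t ≤ j.val ∧ j.val < t + m then
          CN m w ⟨i.val - t, by omega⟩ ⟨j.val - t, by omega⟩
        else 0 := by
  refine ⟨w.map (shiftLetter t hmn), fun i j => ?_⟩
  rw [CN, CNaux_map_shiftLetter t hmn w 1 1 fun _ => rfl]
  rfl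
end

section
/- Fix n, k, J with 1 ≤ k < J ≤ n. The symmetric n×n matrix M with M(k,j) = M(j,k) = 2 for k+1 ≤ j ≤ J and all other entries 0 (the r(k,J)-formation) is the CN matrix of some pure braid projection word on n strands. -/
/-! The word `σ_a σ_{a+1} ⋯ σ_{a+m-1} σ_{a+m-1} ⋯ σ_{a+1} σ_a` carries the strand at position `a`
across positions `a+1, …, a+m` and back, so it is pure and crosses that strand twice with each of the
others it passes. Inductively it is `σ_a W σ_a`, where `W` is the same word started at `a + 1`:
by purity of `W` the outer letters cancel in the permutation, and since scanning from a relabelled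
assignment only relabels the CN matrix, `W` contributes the crossings of strand `a` (now sitting at
position `a + 1`) while the two outer letters contribute its two crossings with strand `a + 1`. -/

/-- Letters are 0-based: the paper's word `W^k_{k+1} ⋯ W^{J-1}_J W^{J-1}_J ⋯ W^k_{k+1}` is
`rFormationWord n (k - 1) (J - k)`. -/
def rFormationWord (n : ℕ) : ℕ → ℕ → List (Fin (n - 1))
  | _, 0 => []
  | a, m + 1 => if h : a < n - 1 then ⟨a, h⟩ :: (rFormationWord n (a + 1) m ++ [⟨a, h⟩]) else []

/-- The paper's `r(k, J)`-formation is `rFormation n (k - 1) (J - k)`. -/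
def rFormation (n a m : ℕ) : Matrix (Fin n) (Fin n) ℕ :=
  Matrix.of fun i j =>
    if (i.val = a ∧ a < j.val ∧ j.val ≤ a + m) ∨ (j.val = a ∧ a < i.val ∧ i.val ≤ a + m)
    then 2 else 0

section Scanning

variable {n : ℕ}

theorem finalPerm_append (u v : List (Fin (n - 1))) (π : Equiv.Perm (Fin n)) :
    finalPerm n π (u ++ v) = finalPerm n (finalPerm n π u) v := by
  induction u generalizing π with
  | nil => rfl
  | cons k u ih => exact ih _

theorem CNaux_append (u v : List (Fin (n - 1))) (π : Equiv.Perm (Fin n)) :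
    CNaux n π (u ++ v) = CNaux n π u + CNaux n (finalPerm n π u) v := by
  induction u generalizing π with
  | nil => simp [CNaux, finalPerm]
  | cons k u ih => simp only [List.cons_append, CNaux, finalPerm, ih, add_assoc]

theorem finalPerm_mul_left (σ π : Equiv.Perm (Fin n)) (w : List (Fin (n - 1))) :
    finalPerm n (σ * π) w = σ * finalPerm n π w := by
  induction w generalizing π with
  | nil => rfl
  | cons k w ih => simp only [finalPerm, mul_assoc, ih]

theorem CNaux_mul_left_apply (σ π : Equiv.Perm (Fin n)) (w : List (Fin (n - 1))) (i j : Fin n) :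
    CNaux n (σ * π) w i j = CNaux n π w (σ⁻¹ i) (σ⁻¹ j) := by
  induction w generalizing π with
  | nil => rfl
  | cons k w ih =>
    simp only [CNaux, Matrix.add_apply, Matrix.single_apply, Equiv.Perm.mul_apply,
      ← Equiv.Perm.eq_inv_iff_eq, mul_assoc, ih]

theorem CNaux_apply (π : Equiv.Perm (Fin n)) (w : List (Fin (n - 1))) (i j : Fin n) :
    CNaux n π w i j = CN n w (π⁻¹ i) (π⁻¹ j) := by
  simpa [CN] using CNaux_mul_left_apply π 1 w i j

theorem finalPerm_eq_mul (π : Equiv.Perm (Fin n)) (w : List (Fin (n - 1))) :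
    finalPerm n π w = π * finalPerm n 1 w := by
  simpa using finalPerm_mul_left π 1 w

theorem braidSwap_apply_val (k : Fin (n - 1)) (x : Fin n) :
    (braidSwap n k x).val =
      if x.val = k.val then k.val + 1 else if x.val = k.val + 1 then k.val else x.val := by
  rw [braidSwap, Equiv.swap_apply_def]
  split_ifs <;> simp_all [Fin.ext_iff, posL, posR]

end Scanning

theorem rFormationWord_succ {n a : ℕ} (m : ℕ) (h : a < n - 1) :
    rFormationWord n a (m + 1) = ⟨a, h⟩ :: (rFormationWord n (a + 1) m ++ [⟨a, h⟩]) := by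
  rw [rFormationWord, dif_pos h]

theorem isPure_rFormationWord_and_CN {n : ℕ} (a m : ℕ) (hm : a + m < n) :
    IsPure n (rFormationWord n a m) ∧ CN n (rFormationWord n a m) = rFormation n a m := by
  induction m generalizing a with
  | zero =>
    refine ⟨rfl, ?_⟩
    ext i j
    simp only [rFormationWord, CN, CNaux, rFormation, Matrix.of_apply]
    split_ifs <;> first | rfl | omega
  | succ m ih =>
    have ha : a < n - 1 := by omega
    obtain ⟨hpure, hCN⟩ := ih (a + 1) (by omega)
    set e : Fin (n - 1) := ⟨a, ha⟩
    set s := braidSwap n e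
    have hss : s * s = 1 := Equiv.swap_mul_self _ _
    have hs_val : ∀ x, (s x).val = if x.val = a then a + 1 else if x.val = a + 1 then a else x.val :=
      braidSwap_apply_val e
    have hback : finalPerm n s (rFormationWord n (a + 1) m) = s := by
      rw [finalPerm_eq_mul, hpure, mul_one]
    refine ⟨?_, ?_⟩
    · rw [IsPure, rFormationWord_succ m ha, finalPerm, one_mul, finalPerm_append, hback]
      exact hss
    · have hlast : CNaux n s [e] = Matrix.single (posR n e) (posL n e) 1 +
          Matrix.single (posL n e) (posR n e) 1 := by
        simp [CNaux, s, braidSwap]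
      ext i j
      rw [CN, rFormationWord_succ m ha, CNaux, one_mul, CNaux_append, hback, hlast]
      simp only [Matrix.add_apply]
      rw [CNaux_apply s (rFormationWord n (a + 1) m), show s⁻¹ = s from Equiv.swap_inv _ _, hCN]
      simp only [Matrix.single_apply, Equiv.Perm.one_apply,
        rFormation, Matrix.of_apply, Fin.ext_iff, hs_val, posL, posR]
      split_ifs <;> omega

theorem stmt8 (n k J : ℕ) (hk : 1 ≤ k) (hkJ : k < J) (hJ : J ≤ n) :
    ∃ w : List (Fin (n - 1)), IsPure n w ∧ ∀ i j : Fin n,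
      CN n w i j =
        if (i.val + 1 = k ∧ k + 1 ≤ j.val + 1 ∧ j.val + 1 ≤ J) ∨
           (j.val + 1 = k ∧ k + 1 ≤ i.val + 1 ∧ i.val + 1 ≤ J) then 2 else 0 := by
  obtain ⟨hpure, hCN⟩ := isPure_rFormationWord_and_CN (n := n) (k - 1) (J - k) (by omega)
  refine ⟨_, hpure, fun i j => ?_⟩
  rw [hCN, rFormation, Matrix.of_apply]
  congr 1
  simp only [eq_iff_iff]
  omega
end

section
/- The number of 5×5 symmetric zero-diagonal T0 matrices with all entries in {0,2} is exactly 357. -/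
/-! A symmetric zero-diagonal matrix with entries in `{0, a}`, `a ≠ 0`, is determined by which of
its strictly upper triangular entries equal `a`; the T0 condition only involves those entries, so
such T0 matrices correspond to Boolean labellings of the pairs `i < j` with the analogous closure
property, and for `n = 5` the latter are counted by exhaustive enumeration over the `2 ^ 10`
labellings. -/

abbrev UpperPair (n : ℕ) := {p : Fin n × Fin n // p.1 < p.2}

def IsT0Upper {n : ℕ} (f : UpperPair n → Bool) : Prop :=
  ∀ i j k : Fin n, ∀ (hij : i < j) (hjk : j < k),
    f ⟨(i, j), hij⟩ = false → f ⟨(j, k), hjk⟩ = false → f ⟨(i, k), hij.trans hjk⟩ = false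

instance {n : ℕ} : DecidablePred (IsT0Upper (n := n)) := fun f => by
  unfold IsT0Upper; infer_instance

namespace Matrix

variable {α : Type*} [Zero α] {n : ℕ}

def upperPart [DecidableEq α] (M : Matrix (Fin n) (Fin n) α) (p : UpperPair n) : Bool :=
  M p.1.1 p.1.2 ≠ 0

def ofUpperPart (a : α) (f : UpperPair n → Bool) : Matrix (Fin n) (Fin n) α :=
  fun i j =>
    if h : i < j then (if f ⟨(i, j), h⟩ then a else 0)
    else if h : j < i then (if f ⟨(j, i), h⟩ then a else 0)
    else 0

variable (a : α) (f : UpperPair n → Bool)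

theorem ofUpperPart_apply_of_lt {i j : Fin n} (h : i < j) :
    ofUpperPart a f i j = if f ⟨(i, j), h⟩ then a else 0 := dif_pos h

theorem isSymm_ofUpperPart : (ofUpperPart a f).IsSymm := by
  refine IsSymm.ext fun i j => ?_
  rcases lt_trichotomy i j with h | rfl | h
  · simp [ofUpperPart, h, h.not_gt]
  · rfl
  · simp [ofUpperPart, h, h.not_gt]

theorem ofUpperPart_apply_self (i : Fin n) : ofUpperPart a f i i = 0 := by
  simp [ofUpperPart]

theorem ofUpperPart_apply_eq_zero_or_eq (i j : Fin n) :
    ofUpperPart a f i j = 0 ∨ ofUpperPart a f i j = a := by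
  unfold ofUpperPart
  split_ifs <;> simp

variable {a}

theorem upperPart_ofUpperPart [DecidableEq α] (ha : a ≠ 0) : upperPart (ofUpperPart a f) = f := by
  funext ⟨⟨i, j⟩, h⟩
  cases hf : f ⟨(i, j), h⟩ <;> simp [upperPart, ofUpperPart_apply_of_lt _ _ h, hf, ha]

theorem ofUpperPart_upperPart [DecidableEq α] {M : Matrix (Fin n) (Fin n) α} (hM : M.IsSymm)
    (hdiag : ∀ i, M i i = 0) (hval : ∀ i j, M i j = 0 ∨ M i j = a) :
    ofUpperPart a (upperPart M) = M := by
  have hlt {i j : Fin n} (h : i < j) : ofUpperPart a (upperPart M) i j = M i j := by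
    rw [ofUpperPart_apply_of_lt _ _ h]
    by_cases h0 : M i j = 0
    · simp [upperPart, h0]
    · simpa [upperPart, h0] using ((hval i j).resolve_left h0).symm
  ext i j
  rcases lt_trichotomy i j with h | rfl | h
  · exact hlt h
  · rw [ofUpperPart_apply_self, hdiag]
  · rw [(isSymm_ofUpperPart a _).apply, hM.apply, hlt h]

theorem isT0_ofUpperPart_iff (ha : a ≠ 0) : IsT0 (ofUpperPart a f) ↔ IsT0Upper f := by
  have hzero {i j : Fin n} (h : i < j) : ofUpperPart a f i j = 0 ↔ f ⟨(i, j), h⟩ = false := by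
    cases hf : f ⟨(i, j), h⟩ <;> simp [ofUpperPart_apply_of_lt _ _ h, hf, ha]
  refine forall₄_congr fun i j k hij => forall_congr' fun hjk => ?_
  rw [hzero hij, hzero hjk, hzero (hij.trans hjk)]

end Matrix

open Matrix in
def t0MatrixEquiv {α : Type*} [Zero α] [DecidableEq α] {n : ℕ} {a : α} (ha : a ≠ 0) :
    {M : Matrix (Fin n) (Fin n) α //
      M.IsSymm ∧ (∀ i, M i i = 0) ∧ (∀ i j, M i j = 0 ∨ M i j = a) ∧ IsT0 M} ≃
    {f : UpperPair n → Bool // IsT0Upper f} where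
  toFun M := ⟨upperPart M.1, by
    obtain ⟨M, hM, hdiag, hval, hT0⟩ := M
    rwa [← isT0_ofUpperPart_iff _ ha, ofUpperPart_upperPart hM hdiag hval]⟩
  invFun f := ⟨ofUpperPart a f.1, isSymm_ofUpperPart a f.1, ofUpperPart_apply_self a f.1,
    ofUpperPart_apply_eq_zero_or_eq a f.1, (isT0_ofUpperPart_iff _ ha).2 f.2⟩
  left_inv M := Subtype.ext (ofUpperPart_upperPart M.2.1 M.2.2.1 M.2.2.2.1)
  right_inv f := Subtype.ext (upperPart_ofUpperPart _ ha)

set_option maxRecDepth 10000 in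
theorem stmt15 :
    Nat.card {M : Matrix (Fin 5) (Fin 5) ℕ //
      M.IsSymm ∧ (∀ i, M i i = 0) ∧ (∀ i j, M i j = 0 ∨ M i j = 2) ∧ IsT0 M} = 357 := by
  rw [Nat.card_congr (t0MatrixEquiv two_ne_zero), Nat.card_eq_fintype_card]
  decide
end

section
/- For every n×n zero-diagonal symmetric integer matrix M there exists a pure signed braid word b on n strands whose crossing matrix C(b) equals M. -/
/-- OU matrix of a signed braid word scanned with assignment `π`:
entry `(i,j)` counts crossings between strands `i` and `j` where `i` is the
over-strand.  For a positive letter (`true`) the strand moving from position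
`k` to position `k+1` is the over-strand. -/
def OUaux (n : ℕ) : Equiv.Perm (Fin n) → List (Fin (n - 1) × Bool) → Matrix (Fin n) (Fin n) ℕ
  | _, [] => 0
  | π, (k, ε) :: w =>
      (if ε then Matrix.single (π (posL n k)) (π (posR n k)) 1
       else Matrix.single (π (posR n k)) (π (posL n k)) 1) +
      OUaux n (π * braidSwap n k) w

/-- OU matrix of a signed braid word on `n` strands. -/
def OU (n : ℕ) (b : List (Fin (n - 1) × Bool)) : Matrix (Fin n) (Fin n) ℕ := OUaux n 1 b

/-- Crossing matrix of a signed braid word scanned with assignment `π`: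
entry `(i,j)` is the number of positive minus negative crossings between
strands `i` and `j` in which `i` is the over-strand. -/
def CMataux (n : ℕ) : Equiv.Perm (Fin n) → List (Fin (n - 1) × Bool) → Matrix (Fin n) (Fin n) ℤ
  | _, [] => 0
  | π, (k, ε) :: w =>
      (if ε then Matrix.single (π (posL n k)) (π (posR n k)) (1 : ℤ)
       else -Matrix.single (π (posR n k)) (π (posL n k)) (1 : ℤ)) +
      CMataux n (π * braidSwap n k) w

/-- Crossing matrix of a signed braid word on `n` strands. -/
def CMat (n : ℕ) (b : List (Fin (n - 1) × Bool)) : Matrix (Fin n) (Fin n) ℤ := CMataux n 1 b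

/-- Final position-to-strand assignment of a signed braid word. -/
def finalPermS (n : ℕ) : Equiv.Perm (Fin n) → List (Fin (n - 1) × Bool) → Equiv.Perm (Fin n)
  | π, [] => π
  | π, (k, _) :: w => finalPermS n (π * braidSwap n k) w

/-- A signed braid word is pure if its induced permutation is the identity. -/
def IsPureS (n : ℕ) (b : List (Fin (n - 1) × Bool)) : Prop := finalPermS n 1 b = 1

/-! Concatenation of pure words adds crossing matrices, so the realisable matrices form an
additive submonoid. Conjugating a pure word by a generator `σ_k` relabels its crossing matrix by
the transposition of `k` and `k + 1`. The pure word `σ_k^{±2}` realises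
`±(E_{k,k+1} + E_{k+1,k})`; conjugating it successively by `σ_{k+1}, σ_{k+2}, …` moves the second
strand to any `j > k`, and every symmetric zero-diagonal matrix is a sum of such
`c (E_{ij} + E_{ji})` with `i < j`. -/

lemma braidSwap_mul_self (n : ℕ) (k : Fin (n - 1)) : braidSwap n k * braidSwap n k = 1 :=
  Equiv.swap_mul_self _ _

lemma braidSwap_posL (n : ℕ) (k : Fin (n - 1)) : braidSwap n k (posL n k) = posR n k :=
  Equiv.swap_apply_left _ _

lemma braidSwap_posR (n : ℕ) (k : Fin (n - 1)) : braidSwap n k (posR n k) = posL n k :=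
  Equiv.swap_apply_right _ _

lemma braidSwap_symm (n : ℕ) (k : Fin (n - 1)) : (braidSwap n k).symm = braidSwap n k :=
  Equiv.symm_swap _ _

lemma finalPermS_append (n : ℕ) (π : Equiv.Perm (Fin n)) (a b : List (Fin (n - 1) × Bool)) :
    finalPermS n π (a ++ b) = finalPermS n (finalPermS n π a) b := by
  induction a generalizing π with
  | nil => rfl
  | cons x a ih => exact ih _

lemma CMataux_append (n : ℕ) (π : Equiv.Perm (Fin n)) (a b : List (Fin (n - 1) × Bool)) :
    CMataux n π (a ++ b) = CMataux n π a + CMataux n (finalPermS n π a) b := by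
  induction a generalizing π with
  | nil => simp [CMataux, finalPermS]
  | cons x a ih => simp [CMataux, finalPermS, ih, add_assoc]

lemma finalPermS_mul (n : ℕ) (π σ : Equiv.Perm (Fin n)) (b : List (Fin (n - 1) × Bool)) :
    finalPermS n (π * σ) b = π * finalPermS n σ b := by
  induction b generalizing σ with
  | nil => rfl
  | cons x b ih => simp only [finalPermS, mul_assoc, ih]

lemma IsPureS.finalPermS_eq {n : ℕ} {b : List (Fin (n - 1) × Bool)} (hb : IsPureS n b)
    (π : Equiv.Perm (Fin n)) : finalPermS n π b = π := by
  have h := finalPermS_mul n π 1 b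
  rwa [mul_one, show finalPermS n 1 b = 1 from hb, mul_one] at h

lemma CMataux_mul (n : ℕ) (π σ : Equiv.Perm (Fin n)) (b : List (Fin (n - 1) × Bool)) :
    CMataux n (π * σ) b = (CMataux n σ b).submatrix ⇑π⁻¹ ⇑π⁻¹ := by
  induction b generalizing σ with
  | nil => rfl
  | cons x b ih =>
    obtain ⟨k, ε⟩ := x
    cases ε <;> simp [CMataux, mul_assoc, ih, Matrix.submatrix_add, Matrix.submatrix_neg]

def pureCrossingMatrices (n : ℕ) : AddSubmonoid (Matrix (Fin n) (Fin n) ℤ) where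
  carrier := {M | ∃ b, IsPureS n b ∧ CMat n b = M}
  zero_mem' := ⟨[], rfl, rfl⟩
  add_mem' := by
    rintro _ _ ⟨a, ha, rfl⟩ ⟨b, hb, rfl⟩
    refine ⟨a ++ b, ?_, ?_⟩
    · rw [IsPureS, finalPermS_append, ha, hb]
    · rw [CMat, CMataux_append, ha]; rfl

lemma submatrix_braidSwap_mem {n : ℕ} {A : Matrix (Fin n) (Fin n) ℤ}
    (hA : A ∈ pureCrossingMatrices n) (k : Fin (n - 1)) :
    A.submatrix (braidSwap n k) (braidSwap n k) ∈ pureCrossingMatrices n := by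
  obtain ⟨b, hb, rfl⟩ := hA
  refine ⟨(k, true) :: (b ++ [(k, false)]), ?_, ?_⟩
  · simp [IsPureS, finalPermS, finalPermS_append, hb.finalPermS_eq, braidSwap_mul_self]
  · have h := CMataux_mul n (braidSwap n k) 1 b
    rw [mul_one, Equiv.Perm.inv_def, braidSwap_symm] at h
    simp [CMat, CMataux, CMataux_append, hb.finalPermS_eq, braidSwap_posL, braidSwap_posR, h]

lemma single_add_single_posL_posR_mem (n : ℕ) (k : Fin (n - 1)) (c : ℤ) :
    Matrix.single (posL n k) (posR n k) c + Matrix.single (posR n k) (posL n k) c ∈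
      pureCrossingMatrices n := by
  have hsquare : ∀ ε : Bool, Matrix.single (posL n k) (posR n k) (if ε then 1 else -1) +
      Matrix.single (posR n k) (posL n k) (if ε then 1 else -1) ∈ pureCrossingMatrices n := by
    intro ε
    refine ⟨[(k, ε), (k, ε)], ?_, ?_⟩
    · simp [IsPureS, finalPermS, braidSwap_mul_self]
    · cases ε <;> simp [CMat, CMataux, braidSwap_posL, braidSwap_posR, Matrix.single_neg, add_comm]
  obtain ⟨m, rfl | rfl⟩ := Int.eq_nat_or_neg c
  · simpa using nsmul_mem (hsquare true) m
  · simpa using nsmul_mem (hsquare false) m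

lemma single_add_single_mem {n : ℕ} {i j : Fin n} (hij : i < j) (c : ℤ) :
    Matrix.single i j c + Matrix.single j i c ∈ pureCrossingMatrices n := by
  obtain ⟨d, hd⟩ : ∃ d, j.val = i.val + 1 + d := ⟨j.val - i.val - 1, by omega⟩
  induction d generalizing j with
  | zero =>
    have hjn := j.isLt
    let k : Fin (n - 1) := ⟨i.val, by omega⟩
    have hi : posL n k = i := rfl
    have hj : posR n k = j := Fin.ext hd.symm
    simpa only [hi, hj] using single_add_single_posL_posR_mem n k c
  | succ d ih =>
    have hjn := j.isLt
    let k : Fin (n - 1) := ⟨i.val + 1 + d, by omega⟩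
    have hki : braidSwap n k i = i :=
      Equiv.swap_apply_of_ne_of_ne (by simp [posL, k, Fin.ext_iff]; omega)
        (by simp [posR, k, Fin.ext_iff]; omega)
    have hkj : braidSwap n k (posL n k) = j := by
      rw [braidSwap_posL]; exact Fin.ext (by simp [posR, k]; omega)
    have hik : i < posL n k := by simp [posL, k, Fin.lt_def]; omega
    have h := submatrix_braidSwap_mem (ih hik rfl) k
    simpa [Matrix.submatrix_add, braidSwap_symm, hki, hkj] using h

lemma Matrix.eq_sum_single_add_single_of_isSymm {ι α : Type*} [Fintype ι] [LinearOrder ι]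
    [AddCommMonoid α] (M : Matrix ι ι α) (hdiag : ∀ i, M i i = 0) (hsymm : M.IsSymm) :
    M = ∑ p ∈ Finset.univ.filter (fun p : ι × ι => p.1 < p.2),
      (Matrix.single p.1 p.2 (M p.1 p.2) + Matrix.single p.2 p.1 (M p.1 p.2)) := by
  ext x y
  have hpair : ∀ a b : ι, (∑ p ∈ Finset.univ.filter (fun p : ι × ι => p.1 < p.2),
      if p = (a, b) then M p.1 p.2 else 0) = if a < b then M a b else 0 := by
    intro a b
    simp [Finset.sum_ite_eq']
  simp only [Matrix.sum_apply, Matrix.add_apply, Matrix.single_apply, Finset.sum_add_distrib]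
  have hswap : ∀ p : ι × ι, ((p.2, p.1) = (x, y)) = (p = (y, x)) := by
    simp [Prod.ext_iff, and_comm]
  simp only [← Prod.mk.injEq, Prod.mk.eta, hswap, hpair]
  rcases lt_trichotomy x y with h | rfl | h
  · simp [h, h.not_gt]
  · simp [hdiag]
  · simp [h, h.not_gt, hsymm.apply]

theorem stmt18 (n : ℕ) (M : Matrix (Fin n) (Fin n) ℤ)
    (hdiag : ∀ i, M i i = 0) (hsymm : M.IsSymm) :
    ∃ b : List (Fin (n - 1) × Bool), IsPureS n b ∧ CMat n b = M := by
  suffices M ∈ pureCrossingMatrices n from this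
  rw [M.eq_sum_single_add_single_of_isSymm hdiag hsymm]
  exact AddSubmonoid.sum_mem _ fun p hp => single_add_single_mem (Finset.mem_filter.1 hp).2 _
end
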